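/- arXiv:2011.10967 — 6 statements merged into one kernel-verified Lean document; each statement's English description precedes it below -/
import Mathlib

section
/- For every real p with 1 ≤ p < ∞, the p-th power of the H^p(T^2) norm of z1 + z2 equals the central binomial coefficient binom(p, p/2) = Γ(p+1)/Γ(p/2+1)^2; that is, ∫_{T^2} |z1 + z2|^p dm_2 = Γ(p+1)/Γ(p/2+1)^2, where m_2 is the Haar probability measure on the 2-torus. Equivalently, (1/2π) ∫_0^{2π} (2 + 2cos θ)^{p/2} dθ = Γ(p+1)/Γ(p/2+1)^2. -/
/-!
Factoring out `exp (I θ₁)` makes the inner integral independent of `θ₁`, so both claims reduce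
to the one-variable average of `|1 + exp (I t)| ^ p = (2 + 2 cos t) ^ (p / 2)`, which equals
`(2 cos (t / 2)) ^ p` on `(0, π)`. By symmetry about `π` and the substitution
`x = cos² (θ / 2) = (1 + cos θ) / 2`, the integral of `cos (θ / 2) ^ p` over `(0, π)` is the
Beta integral `B ((p + 1) / 2, 1 / 2)`, and Legendre's duplication formula turns
`2 ^ p Γ ((p + 1) / 2) Γ (1 / 2) / π` into `Γ (p + 1) / Γ (p / 2 + 1)`.
-/

open scoped Real
open MeasureTheory intervalIntegral Set Real

theorem Real.integral_rpow_mul_one_sub_rpow {a b : ℝ} (ha : 0 < a) (hb : 0 < b) :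
    ∫ x in (0:ℝ)..1, x ^ (a - 1) * (1 - x) ^ (b - 1) = Gamma a * Gamma b / Gamma (a + b) := by
  have hbeta : Complex.betaIntegral a b = ((Gamma a * Gamma b / Gamma (a + b) : ℝ) : ℂ) := by
    rw [Complex.betaIntegral_eq_Gamma_mul_div _ _ (by simpa) (by simpa)]
    push_cast [← Complex.Gamma_ofReal]
    rfl
  rw [Complex.betaIntegral] at hbeta
  rw [← Complex.ofReal_inj, ← hbeta, ← intervalIntegral.integral_ofReal]
  refine integral_congr fun x hx => ?_
  rw [uIcc_of_le zero_le_one] at hx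
  push_cast
  rw [Complex.ofReal_cpow hx.1, Complex.ofReal_cpow (sub_nonneg.2 hx.2)]
  push_cast
  ring_nf

theorem image_one_add_cos_div_two_Ioo :
    (fun θ => (1 + cos θ) / 2) '' Ioo 0 π = Ioo 0 1 := by
  have hanti : StrictAntiOn (fun θ => (1 + cos θ) / 2) (Icc 0 π) := fun x hx y hy hxy => by
    have hcos := strictAntiOn_cos hx hy hxy
    dsimp; linarith
  rw [ContinuousOn.image_Ioo_of_strictAntiOn pi_pos.le (by fun_prop) hanti]
  norm_num

theorem abs_neg_sin_div_two_mul_rpow_eq_cos_half_rpow {p θ : ℝ} (hθ : θ ∈ Ioo 0 π) :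
    |-sin θ / 2| *
        (((1 + cos θ) / 2) ^ ((p + 1) / 2 - 1) * (1 - (1 + cos θ) / 2) ^ ((1:ℝ) / 2 - 1))
      = cos (θ / 2) ^ p := by
  obtain ⟨h0, hπ⟩ := hθ
  have hc : 0 < cos (θ / 2) := cos_pos_of_mem_Ioo ⟨by linarith [pi_pos], by linarith⟩
  have hs : 0 < sin (θ / 2) := sin_pos_of_pos_of_lt_pi (by linarith) (by linarith [pi_pos])
  have hθ2 : θ = 2 * (θ / 2) := by ring
  have hsin : |-sin θ / 2| = sin (θ / 2) * cos (θ / 2) := by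
    rw [hθ2, sin_two_mul, abs_div, abs_neg, abs_of_pos (by positivity)]; norm_num; ring
  have hcos : (1 + cos θ) / 2 = cos (θ / 2) ^ 2 := by rw [hθ2, cos_sq]; ring_nf
  rw [hsin, hcos, ← sin_sq, ← rpow_natCast_mul hc.le, ← rpow_natCast_mul hs.le]
  push_cast
  rw [show (2:ℝ) * ((p + 1) / 2 - 1) = p - 1 by ring, show (2:ℝ) * (1 / 2 - 1) = -1 by ring,
    rpow_neg_one, rpow_sub_one hc.ne']
  field_simp

theorem setIntegral_Ioo_cos_half_rpow (p : ℝ) :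
    ∫ θ in Ioo 0 π, cos (θ / 2) ^ p
      = ∫ x in Ioo 0 1, x ^ ((p + 1) / 2 - 1) * (1 - x) ^ ((1:ℝ) / 2 - 1) := by
  have hderiv : ∀ θ ∈ Ioo 0 π,
      HasDerivWithinAt (fun θ => (1 + cos θ) / 2) (-sin θ / 2) (Ioo 0 π) θ := fun θ _ =>
    (((hasDerivAt_cos θ).const_add 1).div_const 2).hasDerivWithinAt
  have hinj : InjOn (fun θ => (1 + cos θ) / 2) (Ioo 0 π) := fun x hx y hy hxy =>
    injOn_cos (Ioo_subset_Icc_self hx) (Ioo_subset_Icc_self hy) (by dsimp at hxy; linarith)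
  rw [← image_one_add_cos_div_two_Ioo,
    integral_image_eq_integral_abs_deriv_smul measurableSet_Ioo hderiv hinj]
  exact setIntegral_congr_fun measurableSet_Ioo fun θ hθ =>
    (abs_neg_sin_div_two_mul_rpow_eq_cos_half_rpow hθ).symm

theorem integral_cos_half_rpow {p : ℝ} (hp : -1 < p) :
    ∫ θ in (0:ℝ)..π, cos (θ / 2) ^ p
      = Gamma ((p + 1) / 2) * Gamma (1 / 2) / Gamma (p / 2 + 1) := by
  rw [integral_of_le pi_pos.le, integral_Ioc_eq_integral_Ioo, setIntegral_Ioo_cos_half_rpow,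
    ← integral_Ioc_eq_integral_Ioo, ← integral_of_le zero_le_one,
    integral_rpow_mul_one_sub_rpow (by linarith) one_half_pos]
  ring_nf

theorem two_add_two_cos_rpow {θ : ℝ} (hθ : 0 ≤ cos (θ / 2)) (p : ℝ) :
    (2 + 2 * cos θ) ^ (p / 2) = 2 ^ p * cos (θ / 2) ^ p := by
  have hsq : 2 + 2 * cos θ = (2 * cos (θ / 2)) ^ 2 := by
    rw [show θ = 2 * (θ / 2) by ring, cos_two_mul]; ring_nf
  rw [hsq, ← rpow_natCast_mul (by positivity), mul_rpow zero_le_two hθ]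
  push_cast
  ring_nf

theorem integral_two_add_two_cos_rpow_eq_two_mul {p : ℝ} (hp : 0 ≤ p) :
    ∫ θ in (0:ℝ)..(2 * π), (2 + 2 * cos θ) ^ (p / 2)
      = 2 * ∫ θ in (0:ℝ)..π, (2 + 2 * cos θ) ^ (p / 2) := by
  have hcont : Continuous fun θ => (2 + 2 * cos θ) ^ (p / 2) :=
    Continuous.rpow_const (by fun_prop) fun _ => Or.inr (by positivity)
  have hreflect : ∫ θ in π..(2 * π), (2 + 2 * cos θ) ^ (p / 2)
      = ∫ θ in (0:ℝ)..π, (2 + 2 * cos θ) ^ (p / 2) := by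
    have hsub :=
      integral_comp_sub_left (fun θ => (2 + 2 * cos θ) ^ (p / 2)) (2 * π) (a := 0) (b := π)
    simp only [cos_two_pi_sub] at hsub
    rw [hsub]; ring_nf
  rw [← integral_add_adjacent_intervals (hcont.intervalIntegrable 0 π)
    (hcont.intervalIntegrable π (2 * π)), hreflect, two_mul]

theorem Real.Gamma_add_one_div_two_mul_Gamma_div_two_add_one (p : ℝ) :
    Gamma ((p + 1) / 2) * Gamma (p / 2 + 1) = Gamma (p + 1) * 2 ^ (-p) * √π := by
  have := Gamma_mul_Gamma_add_half ((p + 1) / 2)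
  rw [show (p + 1) / 2 + 1 / 2 = p / 2 + 1 by ring, show 2 * ((p + 1) / 2) = p + 1 by ring,
    show 1 - (p + 1) = -p by ring] at this
  exact this

theorem average_two_add_two_cos_rpow {p : ℝ} (hp : 0 ≤ p) :
    (1 / (2 * π)) * (∫ θ in (0:ℝ)..(2 * π), (2 + 2 * cos θ) ^ (p / 2))
      = Gamma (p + 1) / Gamma (p / 2 + 1) ^ 2 := by
  have hhalf : ∫ θ in (0:ℝ)..π, (2 + 2 * cos θ) ^ (p / 2)
      = 2 ^ p * ∫ θ in (0:ℝ)..π, cos (θ / 2) ^ p := by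
    rw [← intervalIntegral.integral_const_mul]
    refine integral_congr fun θ hθ => two_add_two_cos_rpow ?_ p
    rw [uIcc_of_le pi_pos.le] at hθ
    exact cos_nonneg_of_mem_Icc ⟨by linarith [pi_pos, hθ.1], by linarith [hθ.2]⟩
  have hG : Gamma (p / 2 + 1) ≠ 0 := (Gamma_pos_of_pos (by linarith)).ne'
  have h2p : (2:ℝ) ^ p * 2 ^ (-p) = 1 := by rw [← rpow_add two_pos]; simp
  have hsqrt : √π * √π = π := mul_self_sqrt pi_pos.le
  have hdup := Gamma_add_one_div_two_mul_Gamma_div_two_add_one p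
  rw [integral_two_add_two_cos_rpow_eq_two_mul hp, hhalf, integral_cos_half_rpow (by linarith),
    Gamma_one_half_eq]
  generalize Gamma (p / 2 + 1) = G at hG hdup ⊢
  field_simp
  linear_combination (2 ^ p * √π) * hdup + Gamma (p + 1) * (√π ^ 2 * h2p + hsqrt)

theorem norm_one_add_exp_mul_I_rpow (p t : ℝ) :
    ‖1 + Complex.exp (Complex.I * t)‖ ^ p = (2 + 2 * cos t) ^ (p / 2) := by
  have hsq : ‖1 + Complex.exp (Complex.I * t)‖ ^ 2 = 2 + 2 * cos t := by
    rw [mul_comm, Complex.exp_mul_I, ← Complex.ofReal_cos, ← Complex.ofReal_sin,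
      Complex.sq_norm, Complex.normSq_apply]
    simp only [Complex.add_re, Complex.add_im, Complex.one_re, Complex.one_im, Complex.mul_re,
      Complex.mul_im, Complex.ofReal_re, Complex.ofReal_im, Complex.I_re, Complex.I_im]
    nlinarith [sin_sq_add_cos_sq t]
  rw [← hsq, ← rpow_natCast, ← rpow_mul (norm_nonneg _)]
  ring_nf

theorem integral_norm_exp_add_exp_rpow (p θ₁ : ℝ) :
    ∫ θ₂ in (0:ℝ)..(2 * π),
        ‖Complex.exp (Complex.I * θ₁) + Complex.exp (Complex.I * θ₂)‖ ^ p
      = ∫ t in (0:ℝ)..(2 * π), (2 + 2 * cos t) ^ (p / 2) := by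
  have hfactor : ∀ θ₂ : ℝ,
      ‖Complex.exp (Complex.I * θ₁) + Complex.exp (Complex.I * θ₂)‖ ^ p
        = (2 + 2 * cos (θ₂ - θ₁)) ^ (p / 2) := fun θ₂ => by
    have hsum : Complex.exp (Complex.I * θ₁) + Complex.exp (Complex.I * θ₂)
        = Complex.exp (Complex.I * θ₁) * (1 + Complex.exp (Complex.I * ↑(θ₂ - θ₁))) := by
      rw [mul_add, mul_one, ← Complex.exp_add]; push_cast; ring_nf
    rw [hsum, norm_mul, Complex.norm_exp_I_mul_ofReal, one_mul, norm_one_add_exp_mul_I_rpow]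
  have hperiodic : Function.Periodic (fun t => (2 + 2 * cos t) ^ (p / 2)) (2 * π) := fun t => by
    simp only [cos_add_two_pi]
  simp_rw [hfactor]
  rw [integral_comp_sub_right (fun t => (2 + 2 * cos t) ^ (p / 2)), zero_sub, sub_eq_neg_add,
    hperiodic.intervalIntegral_add_eq (-θ₁) 0, zero_add]

theorem stmt0 (p : ℝ) (hp : 1 ≤ p) :
    (1 / (2 * π) ^ 2) *
        (∫ θ₁ in (0:ℝ)..(2 * π), ∫ θ₂ in (0:ℝ)..(2 * π),
          ‖Complex.exp (Complex.I * θ₁) + Complex.exp (Complex.I * θ₂)‖ ^ p)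
      = Real.Gamma (p + 1) / Real.Gamma (p / 2 + 1) ^ 2 ∧
    (1 / (2 * π)) * (∫ θ in (0:ℝ)..(2 * π), (2 + 2 * Real.cos θ) ^ (p / 2))
      = Real.Gamma (p + 1) / Real.Gamma (p / 2 + 1) ^ 2 := by
  have hcircle := average_two_add_two_cos_rpow (by linarith : 0 ≤ p)
  refine ⟨?_, hcircle⟩
  simp_rw [integral_norm_exp_add_exp_rpow, intervalIntegral.integral_const, smul_eq_mul, sub_zero]
  rw [← hcircle]
  field_simp
end

section
/- For every real p with 1 ≤ p < ∞, there holds the identity ∑_{j=0}^∞ binom(p/2, j)^2 = (4/p) ∑_{j=0}^∞ binom(p/2, j)^2 j, where binom(p/2, j) is the generalized binomial coefficient; equivalently, ∑_{j=0}^∞ binom(p/2, j)^2 (4j - p) = 0. -/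
open Filter

/-- The generalized binomial coefficient `r(r-1)⋯(r-j+1)/j!`. -/
noncomputable def gbinom (r : ℝ) (j : ℕ) : ℝ :=
  (∏ k ∈ Finset.range j, (r - k)) / (Nat.factorial j)

lemma gbinom_succ (r : ℝ) (j : ℕ) :
    gbinom r (j+1) = gbinom r j * (r - j) / (j+1) := by
  have h1 : ((Nat.factorial j : ℝ)) ≠ 0 := by positivity
  simp only [gbinom, Finset.prod_range_succ, Nat.factorial_succ]
  push_cast
  rw [div_eq_div_iff (by positivity) (by positivity), div_mul_eq_mul_div,
    div_mul_eq_mul_div, mul_div_assoc, mul_div_assoc, div_self h1]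
  ring

lemma sqrt_nat_pow (N k : ℕ) : Real.sqrt ((N:ℝ) ^ k) = (N:ℝ) ^ ((k:ℝ)/2) := by
  have h0 : (0:ℝ) ≤ (N:ℝ) := by positivity
  rw [Real.sqrt_eq_rpow, ← Real.rpow_natCast (N:ℝ) k, ← Real.rpow_mul h0]
  ring_nf

theorem stmt2 (p : ℝ) (hp : 1 ≤ p) :
    (∑' j : ℕ, gbinom (p / 2) j ^ 2)
      = (4 / p) * ∑' j : ℕ, gbinom (p / 2) j ^ 2 * (j : ℝ) := by
  obtain ⟨r, hr_def⟩ : ∃ r : ℝ, r = p / 2 := ⟨_, rfl⟩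
  rw [← hr_def]
  obtain ⟨g, hg⟩ : ∃ g : ℕ → ℝ, g = gbinom r := ⟨_, rfl⟩
  rw [← hg]
  have hr : (1:ℝ)/2 ≤ r := by rw [hr_def]; linarith
  have hr0 : 0 < r := by linarith
  have hgs : ∀ j : ℕ, g (j+1) = g j * (r - j) / (j+1) := by
    intro j; rw [hg]; exact gbinom_succ r j
  obtain ⟨M, hM5, hMr⟩ : ∃ M : ℕ, 5 ≤ M ∧ r ≤ (M:ℝ) :=
    ⟨max 5 ⌈r⌉₊, le_max_left _ _,
      le_trans (Nat.le_ceil r) (by exact_mod_cast le_max_right 5 ⌈r⌉₊)⟩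
  have hM5' : (5:ℝ) ≤ (M:ℝ) := by exact_mod_cast hM5
  have hM1 : (1:ℕ) ≤ M := by omega
  obtain ⟨C, hC_def⟩ : ∃ C : ℝ, C = g M ^ 4 * (M:ℝ) ^ 5 := ⟨_, rfl⟩
  have hC0 : 0 ≤ C := by rw [hC_def]; positivity
  -- key decay bound: g N ^ 4 * N ^ 5 is bounded by C for N ≥ M
  have key : ∀ N, M ≤ N → g N ^ 4 * (N:ℝ) ^ 5 ≤ C := by
    intro N hN
    induction N, hN using Nat.le_induction with
    | base => exact le_of_eq hC_def.symm
    | succ N hN ih =>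
      refine le_trans ?_ ih
      have hN5 : (5:ℝ) ≤ (N:ℝ) := le_trans hM5' (by exact_mod_cast hN)
      have hNr : r ≤ (N:ℝ) := le_trans hMr (by exact_mod_cast hN)
      have hstep : g (N+1) ^ 4 * ((N+1:ℕ):ℝ) ^ 5
          = g N ^ 4 * ((r - (N:ℝ)) ^ 4 * ((N:ℝ)+1)) := by
        rw [hgs N]; push_cast; field_simp
      rw [hstep]
      have h1 : |r - (N:ℝ)| ≤ (N:ℝ) - 1/2 := by
        rw [abs_le]; constructor <;> linarith
      have h4 : (r - (N:ℝ)) ^ 4 ≤ ((N:ℝ) - 1/2) ^ 4 := by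
        have h2 : (r - (N:ℝ)) ^ 4 = |r - (N:ℝ)| ^ 4 := by
          rw [← abs_pow]
          exact (abs_of_nonneg (by positivity)).symm
        rw [h2]
        exact pow_le_pow_left₀ (abs_nonneg _) h1 4
      have hpoly : ((N:ℝ) - 1/2) ^ 4 * ((N:ℝ) + 1) ≤ (N:ℝ) ^ 5 := by
        nlinarith [sq_nonneg ((N:ℝ)), sq_nonneg ((N:ℝ)-1),
          sq_nonneg ((N:ℝ)*(N:ℝ) - (N:ℝ))]
      have hmain : (r - (N:ℝ)) ^ 4 * ((N:ℝ)+1) ≤ (N:ℝ) ^ 5 :=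
        le_trans (mul_le_mul_of_nonneg_right h4 (by linarith)) hpoly
      exact mul_le_mul_of_nonneg_left hmain (by positivity)
  -- pointwise bound for the j-weighted terms
  have hbdT : ∀ N, M ≤ N → g N ^ 2 * (N:ℝ) ≤ Real.sqrt C * ((N:ℝ) ^ ((3:ℝ)/2))⁻¹ := by
    intro N hN
    have hN1 : (1:ℕ) ≤ N := le_trans hM1 hN
    have hN0 : (0:ℝ) < (N:ℝ) := by exact_mod_cast hN1
    have hsq : (g N ^ 2 * (N:ℝ)) ^ 2 ≤ C / (N:ℝ)^3 := by
      rw [le_div_iff₀ (by positivity)]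
      calc (g N ^ 2 * (N:ℝ)) ^ 2 * (N:ℝ)^3 = g N ^ 4 * (N:ℝ)^5 := by ring
        _ ≤ C := key N hN
    have h1 : g N ^ 2 * (N:ℝ) ≤ Real.sqrt (C / (N:ℝ)^3) := by
      have h2 := Real.sqrt_le_sqrt hsq
      rwa [Real.sqrt_sq (by positivity)] at h2
    have h3 : Real.sqrt (C / (N:ℝ)^3) = Real.sqrt C * ((N:ℝ) ^ ((3:ℝ)/2))⁻¹ := by
      rw [Real.sqrt_div hC0, sqrt_nat_pow N 3, div_eq_mul_inv]
      norm_num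
    rw [h3] at h1; exact h1
  -- pointwise bound for the N² weighted terms
  have hbd2 : ∀ N, M ≤ N → (N:ℝ)^2 * g N ^ 2 ≤ Real.sqrt C * ((N:ℝ) ^ ((1:ℝ)/2))⁻¹ := by
    intro N hN
    have hN1 : (1:ℕ) ≤ N := le_trans hM1 hN
    have hN0 : (0:ℝ) < (N:ℝ) := by exact_mod_cast hN1
    have hsq : ((N:ℝ)^2 * g N ^ 2) ^ 2 ≤ C / (N:ℝ)^1 := by
      rw [le_div_iff₀ (by positivity)]
      calc ((N:ℝ)^2 * g N ^ 2) ^ 2 * (N:ℝ)^1 = g N ^ 4 * (N:ℝ)^5 := by ring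
        _ ≤ C := key N hN
    have h1 : (N:ℝ)^2 * g N ^ 2 ≤ Real.sqrt (C / (N:ℝ)^1) := by
      have h2 := Real.sqrt_le_sqrt hsq
      rwa [Real.sqrt_sq (by positivity)] at h2
    have h3 : Real.sqrt (C / (N:ℝ)^1) = Real.sqrt C * ((N:ℝ) ^ ((1:ℝ)/2))⁻¹ := by
      rw [Real.sqrt_div hC0, sqrt_nat_pow N 1, div_eq_mul_inv]
      norm_num
    rw [h3] at h1; exact h1
  -- summability of the comparison series
  have hcomp : Summable (fun n : ℕ => Real.sqrt C * ((((n + M:ℕ)):ℝ) ^ ((3:ℝ)/2))⁻¹) := by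
    have h1 : Summable (fun n : ℕ => 1 / (n:ℝ) ^ ((3:ℝ)/2)) :=
      Real.summable_one_div_nat_rpow.2 (by norm_num)
    have h2 : Summable (fun n : ℕ => 1 / (((n + M:ℕ)):ℝ) ^ ((3:ℝ)/2)) :=
      (summable_nat_add_iff (f := fun n : ℕ => 1 / (n:ℝ) ^ ((3:ℝ)/2)) M).2 h1
    refine ((h2.mul_left (Real.sqrt C)).congr ?_)
    intro n
    rw [one_div]
  -- summability of g² · j
  have hT : Summable (fun j : ℕ => g j ^ 2 * (j:ℝ)) := by
    rw [← summable_nat_add_iff (f := fun j : ℕ => g j ^ 2 * (j:ℝ)) M]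
    exact Summable.of_nonneg_of_le (fun n => by positivity)
      (fun n => hbdT (n + M) (Nat.le_add_left M n)) hcomp
  -- summability of g²
  have hS : Summable (fun j : ℕ => g j ^ 2) := by
    rw [← summable_nat_add_iff (f := fun j : ℕ => g j ^ 2) 1]
    refine Summable.of_nonneg_of_le (fun n => by positivity) (fun n => ?_)
      ((summable_nat_add_iff (f := fun j : ℕ => g j ^ 2 * (j:ℝ)) 1).2 hT)
    have hn1 : (1:ℝ) ≤ ((n+1:ℕ):ℝ) := by
      exact_mod_cast Nat.one_le_iff_ne_zero.2 (Nat.succ_ne_zero n)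
    calc g (n+1) ^ 2 = g (n+1) ^ 2 * 1 := by ring
      _ ≤ g (n+1) ^ 2 * ((n+1:ℕ):ℝ) :=
          mul_le_mul_of_nonneg_left hn1 (by positivity)
  -- N² g N ² → 0
  have hb0 : Tendsto (fun N : ℕ => (N:ℝ)^2 * g N ^ 2) atTop (nhds 0) := by
    refine squeeze_zero' (g := fun N : ℕ => Real.sqrt C * ((N:ℝ) ^ ((1:ℝ)/2))⁻¹)
      (Eventually.of_forall fun n => by positivity) ?_ ?_
    · filter_upwards [eventually_ge_atTop M] with N hN
      exact hbd2 N hN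
    · have h1 : Tendsto (fun x : ℝ => x ^ (-((1:ℝ)/2))) atTop (nhds 0) :=
        tendsto_rpow_neg_atTop (by norm_num)
      have h2 : Tendsto (fun N : ℕ => ((N:ℝ)) ^ (-((1:ℝ)/2))) atTop (nhds 0) :=
        h1.comp tendsto_natCast_atTop_atTop
      have h3 := h2.const_mul (Real.sqrt C)
      rw [mul_zero] at h3
      refine h3.congr fun N => ?_
      rw [Real.rpow_neg (by positivity)]
  -- the telescoping identity
  have hrec : ∀ j : ℕ, (((j+1:ℕ):ℝ))^2 * g (j+1) ^ 2 - ((j:ℕ):ℝ)^2 * g j ^ 2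
      = g j ^ 2 * (r^2 - 2*r*(j:ℝ)) := by
    intro j
    have hj1 : ((j:ℝ) + 1) ≠ 0 := by positivity
    rw [hgs j]
    push_cast
    field_simp
    ring
  -- summability of the telescoped series
  have hSum : Summable (fun j : ℕ => g j ^ 2 * (r^2 - 2*r*(j:ℝ))) := by
    have h1 : Summable (fun j : ℕ => r^2 * g j ^ 2 - 2*r*(g j ^2 * (j:ℝ))) :=
      (hS.mul_left (r^2)).sub (hT.mul_left (2*r))
    refine h1.congr fun j => ?_
    ring
  -- the telescoped series sums to 0
  have hzero : ∑' j : ℕ, g j ^ 2 * (r^2 - 2*r*(j:ℝ)) = 0 := by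
    have hpartial : ∀ N : ℕ, ∑ j ∈ Finset.range N, g j ^ 2 * (r^2 - 2*r*(j:ℝ))
        = (N:ℝ)^2 * g N ^ 2 := by
      intro N
      have h1 := Finset.sum_range_sub (fun j : ℕ => ((j:ℕ):ℝ)^2 * g j ^ 2) N
      simp only [hrec] at h1
      rw [h1]
      simp
    have h2 : Tendsto (fun N : ℕ => ∑ j ∈ Finset.range N, g j ^ 2 * (r^2 - 2*r*(j:ℝ)))
        atTop (nhds 0) := by
      simp only [hpartial]; exact hb0
    exact tendsto_nhds_unique hSum.hasSum.tendsto_sum_nat h2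
  -- split the telescoped sum
  have hsplit : ∑' j : ℕ, g j ^ 2 * (r^2 - 2*r*(j:ℝ))
      = r^2 * (∑' j : ℕ, g j ^ 2) - 2*r * (∑' j : ℕ, g j ^ 2 * (j:ℝ)) := by
    rw [show (fun j : ℕ => g j ^ 2 * (r^2 - 2*r*(j:ℝ)))
        = (fun j : ℕ => r^2 * g j ^ 2 - 2*r*(g j ^2 * (j:ℝ))) from funext fun j => by ring]
    rw [Summable.tsum_sub (hS.mul_left (r^2)) (hT.mul_left (2*r)), tsum_mul_left, tsum_mul_left]
  have hkey : r^2 * (∑' j : ℕ, g j ^ 2) = 2*r * (∑' j : ℕ, g j ^ 2 * (j:ℝ)) := by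
    rw [hsplit] at hzero; linarith
  have hp0 : p ≠ 0 := by linarith
  have hrne : r ≠ 0 := ne_of_gt hr0
  have hfin : r * (∑' j : ℕ, g j ^ 2) = 2 * (∑' j : ℕ, g j ^ 2 * (j:ℝ)) := by
    have h5 := hkey
    have h6 : r * (r * (∑' j : ℕ, g j ^ 2) - 2 * (∑' j : ℕ, g j ^ 2 * (j:ℝ))) = 0 := by
      ring_nf
      ring_nf at h5
      linarith
    rcases mul_eq_zero.1 h6 with h | h
    · exact absurd h hrne
    · linarith
  rw [hr_def] at hfin
  field_simp
  linarith [hfin]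
end

section
/- Let 0 ≤ x ≤ 1, y = √x (2+x)/(1+2x), and g(z) = z1 + √x · z2 on T^2. Then the orthogonal projection of |g|^2 g onto the Hardy space H^2(T^2) (i.e., retaining only Fourier modes z1^{a} z2^{b} with a, b ≥ 0) equals (1 + 2x)(z1 + y z2). Concretely: P(|g|^2 g)(z) = (1+x) g(z) + x z1 + √x z2 = (1+2x)(z1 + √x (2+x)/(1+2x) · z2). -/
/-!
On the torus `conj z = z⁻¹`, so with `s = √x` the function `|g|² g = g · (z₁⁻¹ + s z₂⁻¹) · g`
is the trigonometric polynomial `(1 + 2s²) z₁ + s(2 + s²) z₂ + s z₁² z₂⁻¹ + s² z₁⁻¹ z₂²`.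
By orthogonality of the characters, the Fourier coefficients of a trigonometric polynomial are
its coefficients, so the Riesz projection just drops the two modes with a negative exponent.
-/

open scoped Real

/-- The `(a,b)` Fourier coefficient of a function on the 2-torus, parametrized by angles. -/
noncomputable def fourierCoef (h : ℝ → ℝ → ℂ) (a b : ℤ) : ℂ :=
  (1 / (2 * π) ^ 2 : ℂ) * ∫ θ₁ in (0:ℝ)..(2 * π), ∫ θ₂ in (0:ℝ)..(2 * π),
    h θ₁ θ₂ * Complex.exp (-Complex.I * ((a : ℂ) * θ₁ + (b : ℂ) * θ₂))

/-- The Riesz projection on the 2-torus: keep only the Fourier modes with both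
indices nonnegative. -/
noncomputable def rieszProj (h : ℝ → ℝ → ℂ) (θ₁ θ₂ : ℝ) : ℂ :=
  ∑' q : ℕ × ℕ, fourierCoef h q.1 q.2 *
    Complex.exp (Complex.I * ((q.1 : ℂ) * θ₁ + (q.2 : ℂ) * θ₂))

open Complex intervalIntegral

theorem integral_exp_int_mul_I (k : ℤ) :
    ∫ θ in (0:ℝ)..(2 * π), exp (k * θ * I) = if k = 0 then 2 * (π : ℂ) else 0 := by
  split_ifs with hk
  · simp [hk]
  · have hkI : (k : ℂ) * I ≠ 0 := mul_ne_zero (by exact_mod_cast hk) I_ne_zero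
    have hper : exp (k * I * (2 * π : ℝ)) = 1 := by
      rw [← exp_int_mul_two_pi_mul_I k]; push_cast; ring_nf
    simp only [mul_right_comm _ _ I]
    rw [integral_exp_mul_complex hkI, hper]
    simp

noncomputable def torusChar (k : ℤ × ℤ) (t₁ t₂ : ℝ) : ℂ :=
  exp (I * ((k.1 : ℂ) * t₁ + (k.2 : ℂ) * t₂))

theorem continuous_torusChar (k : ℤ × ℤ) : Continuous (Function.uncurry (torusChar k)) := by
  unfold torusChar; fun_prop

theorem torusChar_eq_zpow (k : ℤ × ℤ) (t₁ t₂ : ℝ) :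
    torusChar k t₁ t₂ = exp (I * t₁) ^ k.1 * exp (I * t₂) ^ k.2 := by
  rw [← exp_int_mul, ← exp_int_mul, ← exp_add, torusChar]
  ring_nf

theorem torusChar_mul_exp_neg (k : ℤ × ℤ) (a b : ℤ) (t₁ t₂ : ℝ) :
    torusChar k t₁ t₂ * exp (-I * ((a : ℂ) * t₁ + (b : ℂ) * t₂))
      = exp ((k.1 - a : ℤ) * t₁ * I) * exp ((k.2 - b : ℤ) * t₂ * I) := by
  rw [torusChar, ← exp_add, ← exp_add]
  push_cast
  ring_nf

theorem fourierCoef_torusChar (k : ℤ × ℤ) (a b : ℤ) :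
    fourierCoef (torusChar k) a b = if k = (a, b) then 1 else 0 := by
  simp only [fourierCoef, torusChar_mul_exp_neg, integral_const_mul, integral_mul_const,
    integral_exp_int_mul_I, sub_eq_zero, Prod.ext_iff]
  by_cases h₁ : k.1 = a <;> by_cases h₂ : k.2 = b <;> simp only [h₁, h₂] <;> simp
  field_simp

theorem fourierCoef_const_mul (c : ℂ) (h : ℝ → ℝ → ℂ) (a b : ℤ) :
    fourierCoef (fun t₁ t₂ => c * h t₁ t₂) a b = c * fourierCoef h a b := by
  simp only [fourierCoef, mul_assoc, integral_const_mul]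
  ring

theorem fourierCoef_finset_sum {ι : Type*} (s : Finset ι) (f : ι → ℝ → ℝ → ℂ)
    (hf : ∀ i ∈ s, Continuous (Function.uncurry (f i))) (a b : ℤ) :
    fourierCoef (fun t₁ t₂ => ∑ i ∈ s, f i t₁ t₂) a b = ∑ i ∈ s, fourierCoef (f i) a b := by
  have hg : ∀ i ∈ s, Continuous fun t : ℝ × ℝ =>
      f i t.1 t.2 * exp (-I * ((a : ℂ) * t.1 + (b : ℂ) * t.2)) :=
    fun i hi => (hf i hi).mul (by fun_prop)
  have hinner : ∀ t₁, ∫ t₂ in (0:ℝ)..(2 * π),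
      (∑ i ∈ s, f i t₁ t₂) * exp (-I * ((a : ℂ) * t₁ + (b : ℂ) * t₂))
      = ∑ i ∈ s, ∫ t₂ in (0:ℝ)..(2 * π), f i t₁ t₂ * exp (-I * ((a : ℂ) * t₁ + (b : ℂ) * t₂)) := by
    intro t₁
    simp only [Finset.sum_mul]
    exact integral_finsetSum fun i hi =>
      ((hg i hi).comp (Continuous.prodMk_right t₁)).intervalIntegrable _ _
  simp only [fourierCoef, hinner, ← Finset.mul_sum]
  rw [integral_finsetSum fun i hi =>
    (continuous_parametric_intervalIntegral_of_continuous' (hg i hi) _ _).intervalIntegrable _ _]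

noncomputable def trigPoly : (ℤ × ℤ →₀ ℂ) →ₗ[ℂ] ℝ → ℝ → ℂ :=
  Finsupp.linearCombination ℂ torusChar

theorem trigPoly_apply (p : ℤ × ℤ →₀ ℂ) (t₁ t₂ : ℝ) :
    trigPoly p t₁ t₂ = p.sum fun k c => c * torusChar k t₁ t₂ := by
  simp [trigPoly, Finsupp.linearCombination_apply, Finsupp.sum, Finset.sum_apply]

theorem fourierCoef_trigPoly (p : ℤ × ℤ →₀ ℂ) (a b : ℤ) :
    fourierCoef (trigPoly p) a b = p (a, b) := by
  simp only [funext₂ (trigPoly_apply p), Finsupp.sum]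
  rw [fourierCoef_finset_sum _ (fun k t₁ t₂ => p k * torusChar k t₁ t₂)
    fun k _ => continuous_const.mul (continuous_torusChar k)]
  simp only [fourierCoef_const_mul, fourierCoef_torusChar, mul_ite, mul_one, mul_zero]
  exact Finsupp.sum_ite_self_eq' p (a, b)

def analyticPart (p : ℤ × ℤ →₀ ℂ) : ℤ × ℤ →₀ ℂ :=
  p.filter fun k => 0 ≤ k.1 ∧ 0 ≤ k.2

theorem rieszProj_trigPoly (p : ℤ × ℤ →₀ ℂ) :
    rieszProj (trigPoly p) = trigPoly (analyticPart p) := by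
  funext θ₁ θ₂
  set F : ℤ × ℤ → ℂ := fun k => analyticPart p k * torusChar k θ₁ θ₂
  have hcast : Function.Injective fun q : ℕ × ℕ => ((q.1 : ℤ), (q.2 : ℤ)) :=
    fun q q' h => by simpa [Prod.ext_iff] using h
  have hsupp : Function.support F ⊆ Set.range fun q : ℕ × ℕ => ((q.1 : ℤ), (q.2 : ℤ)) := by
    intro k hk
    obtain ⟨h₁, h₂⟩ : 0 ≤ k.1 ∧ 0 ≤ k.2 := by
      by_contra h
      exact hk (by simp only [F, analyticPart, Finsupp.filter_apply, if_neg h, zero_mul])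
    exact ⟨(k.1.toNat, k.2.toNat), by simp [h₁, h₂]⟩
  calc rieszProj (trigPoly p) θ₁ θ₂
      = ∑' q : ℕ × ℕ, F ((q.1 : ℤ), (q.2 : ℤ)) := by
        simp [rieszProj, F, analyticPart, fourierCoef_trigPoly, torusChar]
    _ = ∑' k, F k := hcast.tsum_eq hsupp
    _ = trigPoly (analyticPart p) θ₁ θ₂ := by
        rw [tsum_eq_sum (s := (analyticPart p).support)
          fun k hk => by simp [F, Finsupp.notMem_support_iff.mp hk], trigPoly_apply]
        rfl

theorem ofReal_norm_sq_eq_mul_inv {u v : ℂ} (hu : ‖u‖ = 1) (hv : ‖v‖ = 1) (s : ℝ) :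
    ((‖u + s * v‖ : ℝ) : ℂ) ^ 2 = (u + s * v) * (u⁻¹ + s * v⁻¹) := by
  rw [← mul_conj', map_add, map_mul, conj_ofReal, ← inv_eq_conj hu, ← inv_eq_conj hv]

theorem norm_sq_mul_eq_trigPoly (s : ℝ) :
    (fun t₁ t₂ : ℝ => ((‖exp (I * t₁) + s * exp (I * t₂)‖ : ℝ) : ℂ) ^ 2 *
        (exp (I * t₁) + s * exp (I * t₂)))
      = trigPoly (Finsupp.single (1, 0) (1 + 2 * (s : ℂ) ^ 2)
          + Finsupp.single (0, 1) (s * (2 + (s : ℂ) ^ 2))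
          + Finsupp.single (2, -1) (s : ℂ) + Finsupp.single (-1, 2) ((s : ℂ) ^ 2)) := by
  funext t₁ t₂
  have hu : ‖exp (I * t₁)‖ = 1 := by simp
  have hv : ‖exp (I * t₂)‖ = 1 := by simp
  simp only [map_add, trigPoly, Finsupp.linearCombination_single, Pi.add_apply, Pi.smul_apply,
    smul_eq_mul, torusChar_eq_zpow, ofReal_norm_sq_eq_mul_inv hu hv]
  field_simp
  ring

theorem rieszProj_norm_sq_mul (s θ₁ θ₂ : ℝ) :
    rieszProj (fun t₁ t₂ : ℝ => ((‖exp (I * t₁) + s * exp (I * t₂)‖ : ℝ) : ℂ) ^ 2 *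
        (exp (I * t₁) + s * exp (I * t₂))) θ₁ θ₂
      = (1 + 2 * s ^ 2) * exp (I * θ₁) + s * (2 + s ^ 2) * exp (I * θ₂) := by
  rw [norm_sq_mul_eq_trigPoly, rieszProj_trigPoly]
  simp only [analyticPart, Finsupp.filter_add, Finsupp.filter_single_of_pos,
    Finsupp.filter_single_of_neg, Int.reduceLE, and_true, and_false, not_false_eq_true, add_zero,
    map_add, trigPoly, Finsupp.linearCombination_single, Pi.add_apply, Pi.smul_apply, smul_eq_mul,
    torusChar_eq_zpow, zpow_zero, zpow_one, mul_one, one_mul]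

theorem stmt7 (x : ℝ) (hx : x ∈ Set.Icc (0:ℝ) 1) (θ₁ θ₂ : ℝ) :
    rieszProj (fun t₁ t₂ =>
        ((‖Complex.exp (Complex.I * t₁)
            + (Real.sqrt x : ℂ) * Complex.exp (Complex.I * t₂)‖ : ℝ) : ℂ) ^ 2 *
          (Complex.exp (Complex.I * t₁)
            + (Real.sqrt x : ℂ) * Complex.exp (Complex.I * t₂))) θ₁ θ₂
      = (1 + 2 * x : ℂ) * (Complex.exp (Complex.I * θ₁) +
          ((Real.sqrt x * (2 + x) / (1 + 2 * x) : ℝ) : ℂ) * Complex.exp (Complex.I * θ₂)) := by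
  have hsq : ((√x : ℝ) : ℂ) ^ 2 = x := by exact_mod_cast Real.sq_sqrt hx.1
  have hden : (1 + 2 * x : ℂ) ≠ 0 := by exact_mod_cast (by linarith [hx.1] : 1 + 2 * x ≠ 0)
  rw [rieszProj_norm_sq_mul, hsq]
  push_cast
  field_simp
end

section
/- For every g in H^4(T^2) of the form g(z) = a z1 + b z2 with a, b ≥ 0 and φ_y(z) = z1 + y z2 with 0 ≤ y ≤ 1, one has ⟨g, φ_y⟩ / ‖g‖_{H^4(T^2)} ≤ (1 + 4x + x^2)^{3/4}/(1+2x), where x ∈ [0,1] is determined by y = √x(2+x)/(1+2x), with equality when (a,b) = (1, √x). -/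
/-!
The quartic form `F(a, b) = a⁴ + 4a²b² + b⁴` equals `(a⁴ + b⁴ + (a + b)⁴ + (a - b)⁴) / 3`, a sum of
fourth powers of linear forms, hence it is convex and lies above its tangent planes:
`⟨∇F(c, d), w⟩ ≤ 3 F(c, d) + F(w)`. Applying this to `t • w` and optimising in `t > 0` gives
`⟨∇F(c, d) / 4, w⟩ ≤ F(c, d)^{3/4} F(w)^{1/4}`. For `(c, d) = (1, √x)` the vector `∇F(c, d) / 4` is
`(1 + 2x) • (1, y)`, which is the inequality; equality at `w = (c, d)` is Euler's identity.
-/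

open Real

def quarticForm (a b : ℝ) : ℝ := a ^ 4 + 4 * a ^ 2 * b ^ 2 + b ^ 4

lemma quarticForm_nonneg (a b : ℝ) : 0 ≤ quarticForm a b := by
  unfold quarticForm; positivity

lemma four_mul_pow_three_mul_le (c u : ℝ) : 4 * (c ^ 3 * u) ≤ 3 * c ^ 4 + u ^ 4 := by
  nlinarith [mul_nonneg (sq_nonneg (u - c)) (add_nonneg (sq_nonneg (u + c)) (sq_nonneg c))]

lemma quarticForm_tangent_le (a b c d : ℝ) :
    4 * (a * (c ^ 3 + 2 * c * d ^ 2) + b * (d ^ 3 + 2 * c ^ 2 * d))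
      ≤ 3 * quarticForm c d + quarticForm a b := by
  unfold quarticForm
  linear_combination (1 / 3 : ℝ) * (four_mul_pow_three_mul_le c a + four_mul_pow_three_mul_le d b
    + four_mul_pow_three_mul_le (c + d) (a + b) + four_mul_pow_three_mul_le (c - d) (a - b))

lemma le_rpow_mul_rpow_of_forall_mul_le {n : ℕ} (hn : n ≠ 0) {A B L : ℝ} (hA : 0 < A) (hB : 0 < B)
    (h : ∀ t > 0, n * (t * L) ≤ (n - 1) * A + t ^ n * B) :
    L ≤ A ^ (1 - (n⁻¹ : ℝ)) * B ^ (n⁻¹ : ℝ) := by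
  set t := (A / B) ^ (n⁻¹ : ℝ) with ht_def
  have ht : 0 < t := by positivity
  have htn : t ^ n * B = A := by
    rw [rpow_inv_natCast_pow (div_pos hA hB).le hn, div_mul_cancel₀ A hB.ne']
  have hn' : (0 : ℝ) < n := by positivity
  have htL : t * L ≤ A := le_of_mul_le_mul_left (by linarith [h t ht]) hn'
  calc L ≤ A / t := by rwa [le_div_iff₀ ht, mul_comm]
    _ = A ^ (1 - (n⁻¹ : ℝ)) * B ^ (n⁻¹ : ℝ) := by
      rw [ht_def, div_rpow hA.le hB.le, rpow_sub hA, rpow_one]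
      field_simp

lemma gradient_quarticForm_inner_le (a b c d : ℝ) (hcd : 0 < quarticForm c d)
    (hab : 0 < quarticForm a b) :
    a * (c ^ 3 + 2 * c * d ^ 2) + b * (d ^ 3 + 2 * c ^ 2 * d)
      ≤ quarticForm c d ^ ((3 : ℝ) / 4) * quarticForm a b ^ ((1 : ℝ) / 4) := by
  have h := le_rpow_mul_rpow_of_forall_mul_le (n := 4)
    (L := a * (c ^ 3 + 2 * c * d ^ 2) + b * (d ^ 3 + 2 * c ^ 2 * d)) four_ne_zero hcd hab fun t _ => by
    have htangent := quarticForm_tangent_le (t * a) (t * b) c d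
    unfold quarticForm at htangent ⊢
    push_cast
    linear_combination htangent
  norm_num at h ⊢
  exact h

theorem stmt15_general (a b x : ℝ) (hx : x ∈ Set.Icc (0:ℝ) 1) :
    (a + b * (Real.sqrt x * (2 + x) / (1 + 2 * x)))
        / (a ^ 4 + 4 * a ^ 2 * b ^ 2 + b ^ 4) ^ ((1:ℝ)/4)
      ≤ (1 + 4 * x + x ^ 2) ^ ((3:ℝ)/4) / (1 + 2 * x) ∧
    (1 + Real.sqrt x * (Real.sqrt x * (2 + x) / (1 + 2 * x)))
        / (1 + 4 * x + x ^ 2) ^ ((1:ℝ)/4)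
      = (1 + 4 * x + x ^ 2) ^ ((3:ℝ)/4) / (1 + 2 * x) := by
  set s := √x
  have hs : s ^ 2 = x := sq_sqrt hx.1
  have hx2 : 0 < 1 + 2 * x := by linarith [hx.1]
  have hP : quarticForm 1 s = 1 + 4 * x + x ^ 2 := by unfold quarticForm; rw [← hs]; ring
  have hP0 : 0 < 1 + 4 * x + x ^ 2 := by nlinarith [hx.1]
  change _ / quarticForm a b ^ _ ≤ _ ∧ _
  refine ⟨?_, ?_⟩
  · rcases (quarticForm_nonneg a b).eq_or_lt with hab | hab
    · rw [← hab, zero_rpow (by norm_num), div_zero]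
      positivity
    have key := gradient_quarticForm_inner_le a b 1 s (hP ▸ hP0) hab
    rw [hP] at key
    have hnum : a + b * (s * (2 + x) / (1 + 2 * x))
        = (a * (1 ^ 3 + 2 * 1 * s ^ 2) + b * (s ^ 3 + 2 * 1 ^ 2 * s)) / (1 + 2 * x) := by
      rw [← hs]; field_simp; ring
    rw [hnum, div_right_comm]
    gcongr
    rwa [div_le_iff₀ (by positivity)]
  · have hnum : 1 + s * (s * (2 + x) / (1 + 2 * x)) = (1 + 4 * x + x ^ 2) / (1 + 2 * x) := by
      rw [← hs]; field_simp; ring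
    rw [hnum, div_right_comm, show (3 : ℝ) / 4 = 1 - 1 / 4 by norm_num, rpow_sub hP0, rpow_one]

theorem stmt15 (a b x : ℝ) (ha : 0 ≤ a) (hb : 0 ≤ b) (hx : x ∈ Set.Icc (0:ℝ) 1) :
    (a + b * (Real.sqrt x * (2 + x) / (1 + 2 * x)))
        / (a ^ 4 + 4 * a ^ 2 * b ^ 2 + b ^ 4) ^ ((1:ℝ)/4)
      ≤ (1 + 4 * x + x ^ 2) ^ ((3:ℝ)/4) / (1 + 2 * x) ∧
    (1 + Real.sqrt x * (Real.sqrt x * (2 + x) / (1 + 2 * x)))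
        / (1 + 4 * x + x ^ 2) ^ ((1:ℝ)/4)
      = (1 + 4 * x + x ^ 2) ^ ((3:ℝ)/4) / (1 + 2 * x) :=
  stmt15_general a b x hx
end

section
/- Let 0 < ε < 1 and define ψ on T^2 by ψ(z) = z2 (1 − ε z1 \overline{z2})^2 / |1 − ε z1 \overline{z2}|^2. Then |ψ(z)| = 1 for all z ∈ T^2, and the Riesz projection of ψ (retaining Fourier modes with both indices nonnegative) equals φ(z) = −ε z1 + (1 − ε^2) z2. -/
open scoped Real

/-- `ψ(z) = z₂ (1 - ε z₁ z̄₂)² / |1 - ε z₁ z̄₂|²` on the torus, in angle coordinates. -/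
noncomputable def psi (ε θ₁ θ₂ : ℝ) : ℂ :=
  Complex.exp (Complex.I * θ₂) *
    (1 - (ε : ℂ) * Complex.exp (Complex.I * θ₁) * (starRingEnd ℂ) (Complex.exp (Complex.I * θ₂))) ^ 2 /
    ((‖1 - (ε : ℂ) * Complex.exp (Complex.I * θ₁)
        * (starRingEnd ℂ) (Complex.exp (Complex.I * θ₂))‖ : ℂ)) ^ 2

/-! Since `|1 - w|² = (1 - w)(1 - w̄)`, we get `ψ = z₂ (1 - w) / (1 - w̄)`, which has modulus one
and, for `|w| = |ε| < 1`, equals `(z₂ - ε z₁) ∑ₙ εⁿ z₁⁻ⁿ z₂ⁿ`. This trigonometric series converges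
absolutely, so its Fourier coefficients can be read off term by term. Among its frequencies
`(-n, n + 1)` and `(1 - n, n)` only `(0, 1)` (with coefficients `1` and `-ε²`) and `(1, 0)`
(with coefficient `-ε`) have both indices nonnegative. -/

open Complex ComplexConjugate MeasureTheory

theorem intervalIntegral.hasSum_integral_of_norm_le {E ι : Type*} [NormedAddCommGroup E]
    [NormedSpace ℝ E] [CompleteSpace E] [Countable ι] {F : ι → ℝ → E} {u : ι → ℝ} (hu : Summable u)
    (hF : ∀ i, Continuous (F i)) (hFu : ∀ i t, ‖F i t‖ ≤ u i) (a b : ℝ) :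
    HasSum (fun i => ∫ t in a..b, F i t) (∫ t in a..b, ∑' i, F i t) :=
  intervalIntegral.hasSum_integral_of_dominated_convergence (fun i _ => u i)
    (fun i => (hF i).aestronglyMeasurable) (fun i => ae_of_all _ fun t _ => hFu i t)
    (ae_of_all _ fun _ _ => hu) intervalIntegrable_const
    (ae_of_all _ fun t _ => (hu.of_norm_bounded fun i => hFu i t).hasSum)

theorem integral_exp_I_mul_int_mul (m : ℤ) :
    ∫ θ in (0:ℝ)..2 * π, exp (I * (m * θ)) = if m = 0 then (2 * π : ℂ) else 0 := by
  split_ifs with hm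
  · simp [hm]
  have hc : I * m ≠ 0 := mul_ne_zero I_ne_zero (Int.cast_ne_zero.mpr hm)
  simp_rw [← mul_assoc, integral_exp_mul_complex hc]
  have : exp (I * m * (2 * π)) = 1 := by
    rw [← exp_int_mul_two_pi_mul_I m]; ring_nf
  simp [this]

theorem exp_I_mul_int_mul_add (m n : ℤ) (θ₁ θ₂ : ℝ) :
    exp (I * (m * θ₁ + n * θ₂)) = exp (I * θ₁) ^ m * exp (I * θ₂) ^ n := by
  rw [← exp_int_mul, ← exp_int_mul, ← exp_add]
  ring_nf

theorem norm_exp_I_mul_int_mul (m : ℤ) (θ : ℝ) : ‖exp (I * (m * θ))‖ = 1 := by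
  exact_mod_cast norm_exp_I_mul_ofReal (m * θ)

theorem hasSum_integral_tsum_exp_I_mul_int_mul {ι : Type*} [Countable ι] {c : ι → ℂ}
    (hc : Summable (‖c ·‖)) (m : ι → ℤ) :
    HasSum (fun i => c i * if m i = 0 then (2 * π : ℂ) else 0)
      (∫ θ in (0:ℝ)..2 * π, ∑' i, c i * exp (I * (m i * θ))) := by
  simpa only [intervalIntegral.integral_const_mul, integral_exp_I_mul_int_mul] using
    intervalIntegral.hasSum_integral_of_norm_le (F := fun i θ => c i * exp (I * (m i * θ))) hc
      (fun i => by fun_prop)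
      (fun i θ => by rw [norm_mul, norm_exp_I_mul_int_mul, mul_one]) 0 (2 * π)

theorem hasSum_fourierCoef {ι : Type*} [Countable ι] {h : ℝ → ℝ → ℂ} {c : ι → ℂ}
    {k : ι → ℤ × ℤ} (hc : Summable (‖c ·‖))
    (hh : ∀ θ₁ θ₂ : ℝ, HasSum (fun i => c i * exp (I * ((k i).1 * θ₁ + (k i).2 * θ₂))) (h θ₁ θ₂))
    (a b : ℤ) :
    HasSum (fun i => if k i = (a, b) then c i else 0) (fourierCoef h a b) := by
  set J : ℤ → ℂ := fun m => if m = 0 then (2 * π : ℂ) else 0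
  have hJ : ∀ m, ‖J m‖ ≤ 2 * π := fun m => by
    by_cases hm : m = 0 <;> simp [J, hm, abs_of_pos Real.pi_pos, Real.pi_pos.le]
  have hmode : ∀ θ₁ θ₂ : ℝ, h θ₁ θ₂ * exp (-I * (a * θ₁ + b * θ₂)) = ∑' i,
      c i * exp (I * (((k i).1 - a : ℤ) * θ₁)) * exp (I * (((k i).2 - b : ℤ) * θ₂)) := by
    intro θ₁ θ₂
    rw [← ((hh θ₁ θ₂).mul_right _).tsum_eq]
    refine tsum_congr fun i => ?_
    rw [mul_assoc, mul_assoc, ← exp_add, ← exp_add]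
    push_cast
    ring_nf
  have hinner : ∀ θ₁ : ℝ,
      HasSum (fun i => c i * J ((k i).2 - b) * exp (I * (((k i).1 - a : ℤ) * θ₁)))
        (∫ θ₂ in (0:ℝ)..2 * π, h θ₁ θ₂ * exp (-I * (a * θ₁ + b * θ₂))) := by
    intro θ₁
    simp only [hmode θ₁]
    refine (hasSum_integral_tsum_exp_I_mul_int_mul ?_ _).congr_fun fun i => mul_right_comm _ _ _
    simpa only [norm_mul, norm_exp_I_mul_int_mul, mul_one] using hc
  have hsummable : Summable fun i => ‖c i * J ((k i).2 - b)‖ :=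
    (hc.mul_right (2 * π)).of_nonneg_of_le (fun _ => norm_nonneg _) fun i => by
      rw [norm_mul]; gcongr; exact hJ _
  have houter := (hasSum_integral_tsum_exp_I_mul_int_mul hsummable fun i => (k i).1 - a).mul_left
    (1 / (2 * π) ^ 2 : ℂ)
  rw [intervalIntegral.integral_congr fun θ₁ _ => (hinner θ₁).tsum_eq, ← fourierCoef] at houter
  refine houter.congr_fun fun i => ?_
  have hπ : (π : ℂ) ≠ 0 := ofReal_ne_zero.mpr Real.pi_ne_zero
  simp only [J, Prod.ext_iff, sub_eq_zero]
  split_ifs <;> simp_all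
  field_simp

theorem sq_div_norm_sq_eq_div_conj (z : ℂ) : z ^ 2 / (‖z‖ : ℂ) ^ 2 = z / conj z := by
  rcases eq_or_ne z 0 with rfl | hz
  · simp
  rw [← mul_conj', sq, mul_div_mul_left _ _ hz]

theorem psi_eq_div_conj (ε θ₁ θ₂ : ℝ) :
    psi ε θ₁ θ₂ = exp (I * θ₂) * (1 - ε * exp (I * θ₁) * conj (exp (I * θ₂)))
      / conj (1 - ε * exp (I * θ₁) * conj (exp (I * θ₂))) := by
  rw [psi, mul_div_assoc, sq_div_norm_sq_eq_div_conj, mul_div_assoc]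

theorem norm_psi {ε : ℝ} (hε : |ε| < 1) (θ₁ θ₂ : ℝ) : ‖psi ε θ₁ θ₂‖ = 1 := by
  have hw : ‖(ε : ℂ) * exp (I * θ₁) * conj (exp (I * θ₂))‖ < 1 := by
    simpa [norm_exp_I_mul_ofReal] using hε
  have hne : 1 - (ε : ℂ) * exp (I * θ₁) * conj (exp (I * θ₂)) ≠ 0 :=
    sub_ne_zero.mpr fun h => by simp [← h] at hw
  rw [psi_eq_div_conj, norm_div, norm_mul, norm_exp_I_mul_ofReal, Complex.norm_conj, one_mul,
    div_self (norm_ne_zero_iff.mpr hne)]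

def psiCoef (ε : ℝ) : ℕ ⊕ ℕ → ℂ :=
  Sum.elim (fun n => (ε : ℂ) ^ n) (fun n => -(ε : ℂ) ^ (n + 1))

def psiFreq : ℕ ⊕ ℕ → ℤ × ℤ :=
  Sum.elim (fun n => (-n, n + 1)) (fun n => (1 - n, n))

theorem summable_norm_psiCoef {ε : ℝ} (hε : |ε| < 1) : Summable (‖psiCoef ε ·‖) := by
  have hgeom := summable_geometric_of_lt_one (abs_nonneg ε) hε
  refine Summable.sum _ ?_ ?_
  · simpa [psiCoef, Function.comp_def] using hgeom
  · simpa [psiCoef, Function.comp_def, pow_succ] using hgeom.mul_right |ε|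

theorem hasSum_psi {ε : ℝ} (hε : |ε| < 1) (θ₁ θ₂ : ℝ) :
    HasSum (fun i => psiCoef ε i * exp (I * ((psiFreq i).1 * θ₁ + (psiFreq i).2 * θ₂)))
      (psi ε θ₁ θ₂) := by
  have hconj : ∀ θ : ℝ, conj (exp (I * θ)) = (exp (I * θ))⁻¹ := fun θ =>
    (inv_eq_conj (norm_exp_I_mul_ofReal θ)).symm
  have hpsi : psi ε θ₁ θ₂ = exp (I * θ₂) * (1 - ε * (exp (I * θ₁))⁻¹ * exp (I * θ₂))⁻¹
      + -(ε * exp (I * θ₁)) * (1 - ε * (exp (I * θ₁))⁻¹ * exp (I * θ₂))⁻¹ := by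
    simp only [psi_eq_div_conj, map_sub, map_one, map_mul, map_inv₀, conj_ofReal, hconj]
    have hv := exp_ne_zero (I * θ₂)
    field_simp
    ring
  have hq : ‖ε * (exp (I * θ₁))⁻¹ * exp (I * θ₂)‖ < 1 := by
    simpa [norm_exp_I_mul_ofReal] using hε
  have hgeom := hasSum_geometric_of_norm_lt_one hq
  rw [hpsi]
  refine HasSum.sum ((hgeom.mul_left _).congr_fun fun n => ?_)
    ((hgeom.mul_left _).congr_fun fun n => ?_)
  all_goals
    simp only [Function.comp_apply, psiCoef, psiFreq, Sum.elim_inl, Sum.elim_inr,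
      exp_I_mul_int_mul_add, zpow_neg, zpow_natCast, zpow_add_one₀ (exp_ne_zero _),
      zpow_sub₀ (exp_ne_zero _), zpow_one, mul_pow, inv_pow, pow_succ']
    field_simp

theorem fourierCoef_psi {ε : ℝ} (hε : |ε| < 1) (a b : ℕ) :
    fourierCoef (psi ε) a b
      = if (a, b) = (1, 0) then -(ε : ℂ) else if (a, b) = (0, 1) then 1 - (ε : ℂ) ^ 2 else 0 := by
  refine (hasSum_fourierCoef (summable_norm_psiCoef hε) (hasSum_psi hε) a b).unique ?_
  -- a nonnegative first frequency `-n` resp. `1 - n` leaves only these three terms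
  have hfin := hasSum_sum_of_ne_finset_zero
    (f := fun i => if psiFreq i = ((a : ℤ), (b : ℤ)) then psiCoef ε i else 0)
    (s := {.inl 0, .inr 0, .inr 1}) (L := .unconditional _) <| by
      rintro (n | n) hn
      all_goals
        simp only [psiFreq, Sum.elim_inl, Sum.elim_inr, Prod.mk.injEq, ite_eq_right_iff]
        simp only [Finset.mem_insert, Finset.mem_singleton, Sum.inl.injEq, Sum.inr.injEq,
          reduceCtorEq, or_self, or_false, false_or, not_or] at hn
        omega
  convert hfin using 1
  rw [Finset.sum_insert (by simp), Finset.sum_insert (by simp), Finset.sum_singleton]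
  simp only [psiCoef, psiFreq, Sum.elim_inl, Sum.elim_inr, Prod.ext_iff]
  split_ifs <;> grind

theorem stmt16 (ε : ℝ) (hε : 0 < ε) (hε1 : ε < 1) :
    (∀ θ₁ θ₂ : ℝ, ‖psi ε θ₁ θ₂‖ = 1) ∧
    ∀ θ₁ θ₂ : ℝ, rieszProj (psi ε) θ₁ θ₂
      = -(ε : ℂ) * Complex.exp (Complex.I * θ₁)
        + (1 - (ε : ℂ) ^ 2) * Complex.exp (Complex.I * θ₂) := by
  have habs : |ε| < 1 := abs_lt.mpr ⟨by linarith, hε1⟩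
  refine ⟨norm_psi habs, fun θ₁ θ₂ => ?_⟩
  rw [rieszProj, tsum_eq_sum (s := {(1, 0), (0, 1)})]
  · simp [fourierCoef_psi habs]
  · intro q hq
    simp only [Finset.mem_insert, Finset.mem_singleton, not_or] at hq
    simp [fourierCoef_psi habs, hq]
end

section
/- The harmonic function f(z) = c · Arg((i − z)/(i + z)) maps the open unit disc D into D if and only if |c| ≤ 2/π, and it satisfies f(0) = 0 and |∂f(0)| = |∂̄f(0)| = |c|, where ∂ and ∂̄ are the Wirtinger derivatives. -/
open scoped Real

/-- `f(z) = c · Arg((i - z)/(i + z))`, viewed as a complex-valued (real-valued) function. -/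
noncomputable def harmF (c : ℝ) (z : ℂ) : ℂ :=
  ((c * Complex.arg ((Complex.I - z) / (Complex.I + z)) : ℝ) : ℂ)

/-!
The Cayley map `w(z) = (i - z)/(i + z)` sends the unit disc onto the right half-plane, where `arg`
takes exactly the values in `(-π/2, π/2)`. Hence the values of `f = c · arg ∘ w` on the disc
are the `cθ` with `|θ| < π/2`, and these all lie in `(-1, 1)` iff `|c|π/2 ≤ 1`.
Since `f = c · Im (log ∘ w)` and `(log ∘ w)'(0) = 2i`, the real differential of `f` at `0` is
`h ↦ 2c Re h`, so both Wirtinger derivatives at `0` equal `c`.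
-/

open Complex Set

noncomputable def cayley (z : ℂ) : ℂ := (I - z) / (I + z)

lemma cayley_zero : cayley 0 = 1 := by simp [cayley]

lemma cayley_re (z : ℂ) : (cayley z).re = (1 - ‖z‖ ^ 2) / normSq (I + z) := by
  rw [cayley, div_re, ← add_div, ← normSq_eq_norm_sq, normSq_apply z]
  simp only [sub_re, add_re, sub_im, add_im, I_re, I_im]
  ring

lemma image_cayley_ball : cayley '' Metric.ball 0 1 = {w | 0 < w.re} := by
  apply Subset.antisymm
  · rintro _ ⟨z, hz, rfl⟩
    rw [mem_ball_zero_iff] at hz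
    have hIz : I + z ≠ 0 := fun h => by
      rw [show z = -I by linear_combination h] at hz
      simp at hz
    show 0 < (cayley z).re
    rw [cayley_re]
    have : 0 < normSq (I + z) := normSq_pos.2 hIz
    have : ‖z‖ ^ 2 < 1 := by nlinarith [norm_nonneg z]
    positivity
  · intro w (hw : 0 < w.re)
    have hw' : 1 + w ≠ 0 := fun h => by
      have := congrArg re h
      simp only [add_re, one_re, zero_re] at this
      linarith
    refine ⟨I * (1 - w) / (1 + w), ?_, ?_⟩
    · rw [mem_ball_zero_iff, norm_div, norm_mul, norm_I, one_mul,
        div_lt_one (norm_pos_iff.2 hw'), ← sq_lt_sq₀ (norm_nonneg _) (norm_nonneg _),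
        ← normSq_eq_norm_sq, ← normSq_eq_norm_sq, normSq_apply, normSq_apply]
      simp only [sub_re, add_re, sub_im, add_im, one_re, one_im]
      nlinarith
    · rw [cayley]
      field_simp
      ring

lemma arg_image_re_pos : arg '' {w | 0 < w.re} = Ioo (-(π / 2)) (π / 2) := by
  apply Subset.antisymm
  · rintro _ ⟨w, hw, rfl⟩
    exact abs_lt.1 (abs_arg_lt_pi_div_two_iff.2 (Or.inl hw))
  · intro θ hθ
    refine ⟨exp (θ * I), ?_, ?_⟩
    · show 0 < (exp (θ * I)).re
      rw [exp_ofReal_mul_I_re]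
      exact Real.cos_pos_of_mem_Ioo hθ
    · rw [exp_mul_I]
      exact arg_cos_add_sin_mul_I (θ := θ)
        ⟨by linarith [hθ.1, Real.pi_pos], by linarith [hθ.2, Real.pi_pos]⟩

lemma forall_mem_Ioo_abs_mul_lt_one_iff (a c : ℝ) :
    (∀ θ ∈ Ioo (-a) a, |c * θ| < 1) ↔ |c| * a ≤ 1 := by
  rcases eq_or_ne c 0 with rfl | hc
  · simp
  replace hc : 0 < |c| := abs_pos.2 hc
  simp_rw [abs_mul]
  constructor
  · intro h
    by_contra! hca
    have ha : 0 < a := pos_of_mul_pos_right (by linarith) hc.le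
    have := h |c|⁻¹ ⟨by linarith [inv_pos.2 hc], (inv_lt_iff_one_lt_mul₀' hc).2 hca⟩
    rw [abs_inv, abs_abs, mul_inv_cancel₀ hc.ne'] at this
    exact lt_irrefl _ this
  · intro h θ hθ
    calc |c| * |θ| < |c| * a := mul_lt_mul_of_pos_left (abs_lt.2 hθ) hc
      _ ≤ 1 := h

lemma hasDerivAt_cayley {z : ℂ} (hz : I + z ≠ 0) :
    HasDerivAt cayley (-2 * I / (I + z) ^ 2) z := by
  have h := ((hasDerivAt_id' z).const_sub I).fun_div ((hasDerivAt_id' z).const_add I) hz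
  exact h.congr_deriv (by ring)

lemma hasDerivAt_log_cayley_zero : HasDerivAt (fun z => log (cayley z)) (2 * I) 0 := by
  have hlog := hasDerivAt_log (z := cayley 0) (by rw [cayley_zero]; exact one_mem_slitPlane)
  refine (hlog.comp 0 (hasDerivAt_cayley (by simp))).congr_deriv ?_
  rw [cayley_zero, inv_one, one_mul, add_zero, I_sq]
  ring

lemma fderiv_ofReal_mul_im {g : ℂ → ℂ} {a z : ℂ} (hg : HasDerivAt g a z) (c : ℝ) (h : ℂ) :
    fderiv ℝ (fun w => ((c * (g w).im : ℝ) : ℂ)) z h = c * (a * h).im := by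
  have := ofRealCLM.hasFDerivAt.comp z
    ((c • imCLM).hasFDerivAt.comp z (hg.hasFDerivAt.restrictScalars ℝ))
  rw [show (fun w => ((c * (g w).im : ℝ) : ℂ)) = ofRealCLM ∘ (c • imCLM) ∘ g from rfl,
    this.fderiv]
  simp [-mul_im, mul_comm]

lemma harmF_eq_ofReal_mul_im_log_cayley (c : ℝ) :
    harmF c = fun z => ((c * (log (cayley z)).im : ℝ) : ℂ) := by
  funext z
  rw [log_im]
  rfl

theorem stmt19 (c : ℝ) :
    ((∀ z : ℂ, ‖z‖ < 1 → ‖harmF c z‖ < 1) ↔ |c| ≤ 2/π) ∧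
    harmF c 0 = 0 ∧
    ‖(fderiv ℝ (harmF c) 0 1 - Complex.I * fderiv ℝ (harmF c) 0 Complex.I) / 2‖
      = |c| ∧
    ‖(fderiv ℝ (harmF c) 0 1 + Complex.I * fderiv ℝ (harmF c) 0 Complex.I) / 2‖
      = |c| := by
  have hd (h : ℂ) : fderiv ℝ (harmF c) 0 h = c * (2 * I * h).im := by
    rw [harmF_eq_ofReal_mul_im_log_cayley]
    exact fderiv_ofReal_mul_im hasDerivAt_log_cayley_zero c h
  have hd1 : fderiv ℝ (harmF c) 0 1 = c * 2 := by simp [hd]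
  have hdI : fderiv ℝ (harmF c) 0 I = 0 := by simp [hd]
  refine ⟨?_, by simp [harmF], ?_, ?_⟩
  · calc (∀ z : ℂ, ‖z‖ < 1 → ‖harmF c z‖ < 1)
          ↔ ∀ θ ∈ arg '' (cayley '' Metric.ball 0 1), |c * θ| < 1 := by
          simp only [forall_mem_image, mem_ball_zero_iff, harmF, norm_real, Real.norm_eq_abs]
          rfl
      _ ↔ |c| * (π / 2) ≤ 1 := by
          rw [image_cayley_ball, arg_image_re_pos, forall_mem_Ioo_abs_mul_lt_one_iff]
      _ ↔ |c| ≤ 2 / π := by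
          rw [le_div_iff₀ Real.pi_pos, mul_div_assoc', div_le_one two_pos]
  all_goals
    simp only [hd1, hdI, mul_zero, sub_zero, add_zero]
    rw [mul_div_cancel_right₀ _ two_ne_zero, norm_real, Real.norm_eq_abs]
end
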